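/- Let G = gp⟨X|R⟩ be a finitely presented group, let (Γ, v₀) be a pointed graph labelled with X^±, and let Γ' be the graph obtained from Γ by a single Stallings folding or by cutting a single hair. Then Lab(Γ, v₀) = Lab(Γ', v₀'), where v₀' is the vertex of Γ' corresponding to v₀. -/

import Mathlib

open Monoid

/-- A graph labelled with `X^±`: each edge carries a letter of `X` together with a
sign (`true` for a positive letter `x`, `false` for `x⁻¹`), and there is a
fixed-point-free involution `bar` reversing edges and inverting labels. -/
structure LabeledGraph (X : Type) : Type 1 where
  V : Type
  E : Type
  bar : E → E
  ini : E → V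
  lab : E → X × Bool
  bar_bar : ∀ e, bar (bar e) = e
  bar_ne : ∀ e, bar e ≠ e
  lab_bar : ∀ e, lab (bar e) = ((lab e).1, !(lab e).2)

namespace LabeledGraph

variable {X : Type} (Γ : LabeledGraph X)

/-- the terminal vertex of an edge -/
def ter (e : Γ.E) : Γ.V := Γ.ini (Γ.bar e)

/-- `Γ.IsPathFrom v w l` : the list of edges `l` forms a path from `v` to `w` in `Γ`. -/
def IsPathFrom : Γ.V → Γ.V → List Γ.E → Prop
  | v, w, [] => v = w
  | v, w, e :: l => Γ.ini e = v ∧ IsPathFrom (Γ.ter e) w l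

/-- a graph is well-labelled if edges with the same initial vertex and the same label coincide -/
def WellLabeled : Prop :=
  ∀ e₁ e₂ : Γ.E, Γ.ini e₁ = Γ.ini e₂ → Γ.lab e₁ = Γ.lab e₂ → e₁ = e₂

def Connected : Prop := ∀ v w : Γ.V, ∃ l, Γ.IsPathFrom v w l

/-- the word over `X^±` read along a list of edges -/
def word (l : List Γ.E) : List (X × Bool) := l.map Γ.lab

/-- a path (list of edges) passes through a vertex -/
def PassesThrough (l : List Γ.E) (v : Γ.V) : Prop :=
  ∃ e ∈ l, Γ.ini e = v ∨ Γ.ter e = v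

/-- the list of vertices visited by a path starting at `v` -/
def pathVertices (v : Γ.V) (l : List Γ.E) : List Γ.V := v :: l.map Γ.ter

/-- `v` is within graph distance `n` of `u` -/
def DistLe (n : ℕ) (u v : Γ.V) : Prop := ∃ l, Γ.IsPathFrom u v l ∧ l.length ≤ n

/-- a list of edges is freely reduced -/
def FreelyReduced (l : List Γ.E) : Prop := l.Chain' (fun e e' => e' ≠ Γ.bar e)

end LabeledGraph

/-- evaluation in a group `G` of a word over `X^±`, via a map `g : X → G` -/
def wordVal {X G : Type} [Group G] (g : X → G) (w : List (X × Bool)) : G :=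
  (w.map fun p => if p.2 then g p.1 else (g p.1)⁻¹).prod

namespace LabeledGraph

variable {X G : Type} [Group G] (g : X → G) (Γ : LabeledGraph X)

/-- the value in `G` of (the label of) a path -/
def pathVal (l : List Γ.E) : G := wordVal g (Γ.word l)

/-- `Lab(Γ, v₀)` : the set of values of labels of closed paths at `v₀` -/
def LabSet (v₀ : Γ.V) : Set G :=
  {x | ∃ l, Γ.IsPathFrom v₀ v₀ l ∧ Γ.pathVal g l = x}

/-- a graph is `G`-based if every path whose label is trivial in `G` is closed -/
def IsGBased : Prop :=
  ∀ v w l, Γ.IsPathFrom v w l → Γ.pathVal g l = 1 → v = w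

end LabeledGraph

/-- a morphism of labelled graphs -/
structure GraphHom {X : Type} (Γ Δ : LabeledGraph X) where
  fV : Γ.V → Δ.V
  fE : Γ.E → Δ.E
  map_ini : ∀ e, Δ.ini (fE e) = fV (Γ.ini e)
  map_bar : ∀ e, Δ.bar (fE e) = fE (Γ.bar e)
  map_lab : ∀ e, Δ.lab (fE e) = Γ.lab e

/-- the image of a morphism of labelled graphs, as a labelled graph -/
def GraphHom.image {X : Type} {Γ Δ : LabeledGraph X} (ψ : GraphHom Γ Δ) :
    LabeledGraph X where
  V := Set.range ψ.fV
  E := Set.range ψ.fE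
  bar e := ⟨Δ.bar e.1, by
    obtain ⟨a, ha⟩ := e.2
    exact ⟨Γ.bar a, by rw [← ψ.map_bar, ha]⟩⟩
  ini e := ⟨Δ.ini e.1, by
    obtain ⟨a, ha⟩ := e.2
    exact ⟨Γ.ini a, by rw [← ψ.map_ini, ha]⟩⟩
  lab e := Δ.lab e.1
  bar_bar e := Subtype.ext (Δ.bar_bar e.1)
  bar_ne e h := Δ.bar_ne e.1 (congrArg Subtype.val h)
  lab_bar e := Δ.lab_bar e.1

/-- an isomorphism of pointed labelled graphs exists -/
def IsPointedIso {X : Type} (Γ Δ : LabeledGraph X) (v₀ : Γ.V) (w₀ : Δ.V) : Prop :=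
  ∃ ψ : GraphHom Γ Δ, Function.Bijective ψ.fV ∧ Function.Bijective ψ.fE ∧ ψ.fV v₀ = w₀

/-- right multiplication by `g` on the set of right cosets of `H` -/
def cosMul {G : Type} [Group G] (H : Subgroup G) (g : G) :
    Quotient (QuotientGroup.rightRel H) → Quotient (QuotientGroup.rightRel H) :=
  Quotient.map (· * g) <| by
    intro a b hab
    have hab' := (QuotientGroup.rightRel_apply).1 hab
    exact (QuotientGroup.rightRel_apply).2 (by simpa [mul_inv_rev, mul_assoc] using hab')

/-- the relative Cayley graph of `G` with respect to a subgroup `H`, with edges labelled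
by letters from `Y` embedded into an alphabet `X` and evaluated in `G` via `val`. -/
def relCayley {G : Type} [Group G] (H : Subgroup G) {Y X : Type}
    (emb : Y → X) (val : Y → G) : LabeledGraph X where
  V := Quotient (QuotientGroup.rightRel H)
  E := Quotient (QuotientGroup.rightRel H) × (Y × Bool)
  bar e := (cosMul H (if e.2.2 then val e.2.1 else (val e.2.1)⁻¹) e.1, (e.2.1, !e.2.2))
  ini e := e.1
  lab e := (emb e.2.1, e.2.2)
  bar_bar := by
    rintro ⟨v, y, b⟩
    induction v using Quotient.inductionOn with
    | h a => cases b <;> simp [cosMul, mul_assoc]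
  bar_ne := by
    rintro ⟨v, y, b⟩ h
    have := congrArg (fun e => e.2.2) h
    simp at this
  lab_bar := by rintro ⟨v, y, b⟩; rfl
/-- `(Γ', v₀')` is obtained from `(Γ, v₀)` by a single Stallings folding: the
identification of a pair of distinct edges with the same initial vertex and the
same label. -/
def IsFoldingOf {X : Type} (Γ Γ' : LabeledGraph X) (v₀ : Γ.V) (v₀' : Γ'.V) : Prop :=
  ∃ (π : GraphHom Γ Γ') (e₁ e₂ : Γ.E),
    e₁ ≠ e₂ ∧ Γ.ini e₁ = Γ.ini e₂ ∧ Γ.lab e₁ = Γ.lab e₂ ∧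
    Function.Surjective π.fV ∧ Function.Surjective π.fE ∧
    π.fV v₀ = v₀' ∧ π.fE e₁ = π.fE e₂ ∧ π.fV (Γ.ter e₁) = π.fV (Γ.ter e₂) ∧
    (∀ a b : Γ.E, π.fE a = π.fE b →
      a = b ∨ ({a, b} : Set Γ.E) = {e₁, e₂} ∨ ({a, b} : Set Γ.E) = {Γ.bar e₁, Γ.bar e₂}) ∧
    (∀ u v : Γ.V, π.fV u = π.fV v → u = v ∨ ({u, v} : Set Γ.V) = {Γ.ter e₁, Γ.ter e₂})

/-- `(Γ', v₀')` is obtained from `(Γ, v₀)` by cutting a single hair: the removal of an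
edge (pair) whose terminal vertex has degree one. -/
def IsHairCutOf {X : Type} (Γ Γ' : LabeledGraph X) (v₀ : Γ.V) (v₀' : Γ'.V) : Prop :=
  ∃ (π : GraphHom Γ' Γ) (e : Γ.E),
    (∀ e' : Γ.E, Γ.ini e' = Γ.ter e → e' = Γ.bar e) ∧
    Function.Injective π.fV ∧ Function.Injective π.fE ∧
    Set.range π.fV = {v | v ≠ Γ.ter e} ∧
    Set.range π.fE = {f | f ≠ e ∧ f ≠ Γ.bar e} ∧
    π.fV v₀' = v₀

/-- `(Γ', v₀')` is obtained from `(Γ, v₀)` by identifying the two distinct vertices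
`v₁` and `v₂` into a single vertex (the edge sets being in natural bijection). -/
def IsEndpointIdentification {X : Type} (Γ Γ' : LabeledGraph X) (v₁ v₂ : Γ.V)
    (v₀ : Γ.V) (v₀' : Γ'.V) : Prop :=
  ∃ π : GraphHom Γ Γ', Function.Surjective π.fV ∧ Function.Bijective π.fE ∧
    π.fV v₀ = v₀' ∧ π.fV v₁ = π.fV v₂ ∧
    ∀ u v : Γ.V, π.fV u = π.fV v → u = v ∨ ({u, v} : Set Γ.V) = {v₁, v₂}
namespace Amalgam

variable {X : Fin 2 → Type} {Gi : Fin 2 → Type} [∀ i, Group (Gi i)]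
  {A : Type} [Group A] (φ : ∀ i, A →* Gi i) (gen : ∀ i, X i → Gi i)

/-- the combined alphabet `X = X₁ ⊔ X₂` (disjoint by construction) -/
abbrev Alpha (X : Fin 2 → Type) : Type := (i : Fin 2) × X i

/-- evaluation of the letters in the amalgam `G = G₁ ∗_A G₂` -/
def genG : Alpha X → PushoutI φ := fun a => PushoutI.of (φ := φ) a.1 (gen a.1 a.2)

/-- the image of the amalgamated subgroup `A` in `G` -/
def Asub : Subgroup (PushoutI φ) := (PushoutI.base φ).range

variable (Γ : LabeledGraph (Alpha X))

/-- the color (`1` or `2`) of an edge -/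
def colorE (e : Γ.E) : Fin 2 := (Γ.lab e).1.1

/-- one step between vertices along an edge of color `i` -/
def MonoStep (i : Fin 2) (u v : Γ.V) : Prop :=
  ∃ e : Γ.E, colorE Γ e = i ∧ Γ.ini e = u ∧ Γ.ter e = v

/-- reachability by paths of color `i` -/
def monoReach (i : Fin 2) : Γ.V → Γ.V → Prop := Relation.ReflTransGen (MonoStep Γ i)

/-- the monochromatic component of an edge: all edges of the same color whose initial
vertex is monochromatically reachable from that of `e₀` -/
def monoComponent (e₀ : Γ.E) : Set Γ.E :=
  {e | colorE Γ e = colorE Γ e₀ ∧ monoReach Γ (colorE Γ e₀) (Γ.ini e₀) (Γ.ini e)}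

/-- `C` is an `X_i`-monochromatic component of `Γ` -/
def IsMonoComponent (i : Fin 2) (C : Set Γ.E) : Prop :=
  ∃ e₀, colorE Γ e₀ = i ∧ C = monoComponent Γ e₀

/-- the vertex set of a set of edges -/
def VSet (C : Set Γ.E) : Set Γ.V := {v | ∃ e ∈ C, Γ.ini e = v}

/-- a vertex is bichromatic if edges of both colors begin at it -/
def Bichromatic (v : Γ.V) : Prop :=
  (∃ e, Γ.ini e = v ∧ colorE Γ e = 0) ∧ (∃ e, Γ.ini e = v ∧ colorE Γ e = 1)

/-- the bichromatic vertices of a component -/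
def VB (C : Set Γ.E) : Set Γ.V := {v ∈ VSet Γ C | Bichromatic Γ v}

/-- `Lab(C, u)` : values of labels of closed paths at `u` inside the edge set `C` -/
def LabSetIn (C : Set Γ.E) (u : Γ.V) : Set (PushoutI φ) :=
  {x | ∃ l, (∀ e ∈ l, e ∈ C) ∧ Γ.IsPathFrom u u l ∧ Γ.pathVal (genG φ gen) l = x}

/-- the `A`-orbit of a vertex `ϑ` inside a monochromatic component `C` -/
def AOrbit (C : Set Γ.E) (ϑ : Γ.V) : Set Γ.V :=
  {v | ∃ l, (∀ e ∈ l, e ∈ C) ∧ Γ.IsPathFrom ϑ v l ∧ Γ.pathVal (genG φ gen) l ∈ Asub φ}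

/-- `Γ` is `X_i^±`-saturated at `v` -/
def SaturatedAt (i : Fin 2) (v : Γ.V) : Prop :=
  ∀ (x : X i) (b : Bool), ∃ e : Γ.E, Γ.ini e = v ∧ Γ.lab e = (⟨i, x⟩, b)

/-- a (connected) precover of `G = G₁ ∗_A G₂` : a well-labelled `G`-based graph all of whose
monochromatic components are covers of the corresponding free factor -/
def IsPrecover : Prop :=
  Γ.WellLabeled ∧ Γ.Connected ∧ Γ.IsGBased (genG φ gen) ∧
    ∀ i C, IsMonoComponent Γ i C → ∀ v ∈ VSet Γ C, SaturatedAt Γ i v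

/-- a redundant monochromatic component of a pointed precover -/
def Redundant (v₀ : Γ.V) (i : Fin 2) (C : Set Γ.E) : Prop :=
  IsMonoComponent Γ i C ∧
    (((∀ j D, IsMonoComponent Γ j D → D = C) ∧ LabSetIn φ gen Γ C v₀ = {1}) ∨
      ((∃ j D, IsMonoComponent Γ j D ∧ D ≠ C) ∧
        (∀ ϑ ∈ VB Γ C, LabSetIn φ gen Γ C ϑ ⊆ (Asub φ : Set (PushoutI φ)) ∧
          VB Γ C = AOrbit φ gen Γ C ϑ) ∧
        (v₀ ∉ VSet Γ C ∨ (v₀ ∈ VB Γ C ∧ LabSetIn φ gen Γ C v₀ = {1}))))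

/-- a reduced precover -/
def IsReducedPrecover (v₀ : Γ.V) : Prop :=
  IsPrecover φ gen Γ ∧ (∀ i C, ¬ Redundant φ gen Γ v₀ i C) ∧
    ∀ i C, IsMonoComponent Γ i C → v₀ ∈ VSet Γ C →
      LabSetIn φ gen Γ C v₀ ∩ (Asub φ : Set (PushoutI φ)) ≠ {1} →
      ∃ j D, j ≠ i ∧ IsMonoComponent Γ j D ∧ v₀ ∈ VSet Γ D ∧
        LabSetIn φ gen Γ D v₀ ∩ (Asub φ : Set (PushoutI φ)) =
          LabSetIn φ gen Γ C v₀ ∩ (Asub φ : Set (PushoutI φ))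

/-- a decomposition into monochromatic blocks witnessing a word in normal form:
each block is nonempty and monochromatic, consecutive blocks have different colors,
each syllable is nontrivial, and if there is more than one syllable then no syllable
lies in (the image of) `A` -/
def NormalParts (parts : List (Fin 2 × List (Alpha X × Bool))) : Prop :=
  parts ≠ [] ∧
    (∀ p ∈ parts, p.2 ≠ [] ∧ ∀ a ∈ p.2, a.1.1 = p.1) ∧
    parts.Chain' (fun p q => p.1 ≠ q.1) ∧
    (∀ p ∈ parts, wordVal (genG φ gen) p.2 ≠ 1) ∧
    (parts.length ≠ 1 → ∀ p ∈ parts, wordVal (genG φ gen) p.2 ∉ Asub φ)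

/-- a word over `X^±` is in normal form -/
def IsNormalWord (w : List (Alpha X × Bool)) : Prop :=
  ∃ parts, NormalParts φ gen parts ∧ w = (parts.map Prod.snd).flatten

/-- a normal path from `v` to `w` : a path whose label is a word in normal form -/
def IsNormalPathFrom (v w : Γ.V) (l : List Γ.E) : Prop :=
  Γ.IsPathFrom v w l ∧ IsNormalWord φ gen (Γ.word l)

/-- the relative Cayley graph `Cayley(G, H)` of the amalgam -/
def cayleyGraph (H : Subgroup (PushoutI φ)) : LabeledGraph (Alpha X) :=
  relCayley H (id : Alpha X → Alpha X) (genG φ gen)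

/-- the basepoint `H · 1` of `Cayley(G, H)` -/
def cayleyBase (H : Subgroup (PushoutI φ)) : (cayleyGraph φ gen H).V :=
  Quotient.mk (QuotientGroup.rightRel H) 1

/-- an essential vertex of `Cayley(G, H)` : one through which a normal path closed at the
basepoint passes -/
def Essential (H : Subgroup (PushoutI φ)) (v : (cayleyGraph φ gen H).V) : Prop :=
  ∃ l, IsNormalPathFrom φ gen (cayleyGraph φ gen H) (cayleyBase φ gen H) (cayleyBase φ gen H) l ∧
    (cayleyGraph φ gen H).PassesThrough l v

/-- the vertices of the normal core: the basepoint together with the essential vertices -/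
def CoreV (H : Subgroup (PushoutI φ)) (v : (cayleyGraph φ gen H).V) : Prop :=
  v = cayleyBase φ gen H ∨ Essential φ gen H v

/-- the normal core of `Cayley(G, H)` : the restriction of `Cayley(G, H)` to the
essential vertices -/
def normalCore (H : Subgroup (PushoutI φ)) : LabeledGraph (Alpha X) where
  V := {v : (cayleyGraph φ gen H).V // CoreV φ gen H v}
  E := {e : (cayleyGraph φ gen H).E //
        CoreV φ gen H ((cayleyGraph φ gen H).ini e) ∧ CoreV φ gen H ((cayleyGraph φ gen H).ter e)}
  bar e := ⟨(cayleyGraph φ gen H).bar e.1, by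
    refine ⟨e.2.2, ?_⟩
    have : (cayleyGraph φ gen H).ter ((cayleyGraph φ gen H).bar e.1) = (cayleyGraph φ gen H).ini e.1 := by
      rw [LabeledGraph.ter, (cayleyGraph φ gen H).bar_bar]
    rw [this]
    exact e.2.1⟩
  ini e := ⟨(cayleyGraph φ gen H).ini e.1, e.2.1⟩
  lab e := (cayleyGraph φ gen H).lab e.1
  bar_bar e := Subtype.ext ((cayleyGraph φ gen H).bar_bar e.1)
  bar_ne e h := (cayleyGraph φ gen H).bar_ne e.1 (congrArg Subtype.val h)
  lab_bar e := (cayleyGraph φ gen H).lab_bar e.1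

/-- the basepoint of the normal core -/
def coreBase (H : Subgroup (PushoutI φ)) : (normalCore φ gen H).V :=
  ⟨cayleyBase φ gen H, Or.inl rfl⟩

/-- the relative Cayley graph of a free factor `G_j` with respect to a subgroup `L ≤ G_j`,
viewed as a graph labelled with `X^±` (using only letters of color `j`) -/
def cayleyFactor (j : Fin 2) (L : Subgroup (Gi j)) : LabeledGraph (Alpha X) :=
  relCayley L (fun x : X j => (⟨j, x⟩ : Alpha X)) (gen j)

/-- the diameter of the factor group `G_i` : the length of a longest geodesic in its
Cayley graph, i.e. the least `n` such that every element is a product of at most `n`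
generators and inverses -/
noncomputable def groupDiam (i : Fin 2) : ℕ :=
  sInf {n | ∀ h : Gi i, ∃ w : List (X i × Bool), wordVal (gen i) w = h ∧ w.length ≤ n}

end Amalgam
section StallingsAux

variable {X G : Type} [Group G]

lemma wordVal_cons' (g : X → G) (p : X × Bool) (w : List (X × Bool)) :
    wordVal g (p :: w) = (if p.2 then g p.1 else (g p.1)⁻¹) * wordVal g w := by
  simp [wordVal]

lemma wordVal_append' (g : X → G) (w₁ w₂ : List (X × Bool)) :
    wordVal g (w₁ ++ w₂) = wordVal g w₁ * wordVal g w₂ := by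
  simp [wordVal]

namespace LabeledGraph

/-- value of a single edge -/
def edgeVal (g : X → G) (Γ : LabeledGraph X) (e : Γ.E) : G :=
  if (Γ.lab e).2 then g (Γ.lab e).1 else (g (Γ.lab e).1)⁻¹

variable (g : X → G) (Γ : LabeledGraph X)

lemma pathVal_nil : Γ.pathVal g ([] : List Γ.E) = 1 := rfl

lemma pathVal_cons (e : Γ.E) (l : List Γ.E) :
    Γ.pathVal g (e :: l) = Γ.edgeVal g e * Γ.pathVal g l := by
  simp [pathVal, word, wordVal, edgeVal]

lemma pathVal_append (l₁ l₂ : List Γ.E) :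
    Γ.pathVal g (l₁ ++ l₂) = Γ.pathVal g l₁ * Γ.pathVal g l₂ := by
  simp [pathVal, word, wordVal_append']

lemma edgeVal_bar (e : Γ.E) : Γ.edgeVal g (Γ.bar e) = (Γ.edgeVal g e)⁻¹ := by
  simp only [edgeVal, Γ.lab_bar]
  cases h : (Γ.lab e).2 <;> simp

lemma ter_bar (e : Γ.E) : Γ.ter (Γ.bar e) = Γ.ini e := by
  simp [ter, Γ.bar_bar]

lemma isPathFrom_append {v w u : Γ.V} {l₁ l₂ : List Γ.E}
    (h₁ : Γ.IsPathFrom v w l₁) (h₂ : Γ.IsPathFrom w u l₂) :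
    Γ.IsPathFrom v u (l₁ ++ l₂) := by
  induction l₁ generalizing v with
  | nil => cases h₁; exact h₂
  | cons e l ih => exact ⟨h₁.1, ih h₁.2⟩

end LabeledGraph

namespace GraphHom

variable {Γ Δ : LabeledGraph X} (ψ : GraphHom Γ Δ)

lemma map_ter (e : Γ.E) : Δ.ter (ψ.fE e) = ψ.fV (Γ.ter e) := by
  rw [LabeledGraph.ter, ψ.map_bar, ψ.map_ini]; rfl

lemma map_path {v w : Γ.V} {l : List Γ.E} (h : Γ.IsPathFrom v w l) :
    Δ.IsPathFrom (ψ.fV v) (ψ.fV w) (l.map ψ.fE) := by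
  induction l generalizing v with
  | nil => exact congrArg ψ.fV h
  | cons e l ih =>
    refine ⟨by rw [ψ.map_ini, h.1], ?_⟩
    rw [ψ.map_ter]
    exact ih h.2

lemma map_pathVal (g : X → G) (l : List Γ.E) :
    Δ.pathVal g (l.map ψ.fE) = Γ.pathVal g l := by
  induction l with
  | nil => rfl
  | cons e l ih =>
    rw [List.map_cons, LabeledGraph.pathVal_cons, LabeledGraph.pathVal_cons, ih]
    congr 1
    simp [LabeledGraph.edgeVal, ψ.map_lab]

end GraphHom

/-- eliminating a hair edge from a path whose endpoints avoid the hair tip -/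
lemma hair_reduce {Γ : LabeledGraph X} (g : X → G) (e : Γ.E)
    (hdeg : ∀ f : Γ.E, Γ.ini f = Γ.ter e → f = Γ.bar e) :
    ∀ (n : ℕ) (l : List Γ.E) (v w : Γ.V), l.length ≤ n →
      v ≠ Γ.ter e → w ≠ Γ.ter e → Γ.IsPathFrom v w l →
      ∃ l₂, Γ.IsPathFrom v w l₂ ∧ Γ.pathVal g l₂ = Γ.pathVal g l ∧
        ∀ f ∈ l₂, f ≠ e ∧ f ≠ Γ.bar e := by
  intro n
  induction n with
  | zero =>
    intro l v w hlen _ _ hp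
    interval_cases hl : l.length
    · match l, hl with
      | [], _ => exact ⟨[], hp, rfl, by simp⟩
  | succ n ih =>
    intro l v w hlen hv hw hp
    match l with
    | [] => exact ⟨[], hp, rfl, by simp⟩
    | f :: rest =>
      by_cases hfe : f = e
      · subst hfe
        match rest with
        | [] =>
          exact absurd hp.2 (Ne.symm hw)
        | f₂ :: rest₂ =>
          have hf₂ : f₂ = Γ.bar f := hdeg f₂ hp.2.1
          have hter : Γ.ter f₂ = v := by rw [hf₂, Γ.ter_bar, hp.1]
          have hrest : Γ.IsPathFrom v w rest₂ := hter ▸ hp.2.2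
          obtain ⟨l₂, h₁, h₂, h₃⟩ := ih rest₂ v w (by simp at hlen ⊢; omega) hv hw hrest
          refine ⟨l₂, h₁, ?_, h₃⟩
          rw [h₂, Γ.pathVal_cons, Γ.pathVal_cons, hf₂, Γ.edgeVal_bar, ← mul_assoc,
            mul_inv_cancel, one_mul]
      · have hfbar : f ≠ Γ.bar e := by
          intro hh
          apply hv
          rw [← hp.1, hh]
          rfl
        have hterf : Γ.ter f ≠ Γ.ter e := by
          intro hh
          exact hfe (by have := hdeg (Γ.bar f) hh; rw [← Γ.bar_bar f, this, Γ.bar_bar])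
        obtain ⟨l₂, h₁, h₂, h₃⟩ := ih rest (Γ.ter f) w (by simpa using hlen) hterf hw hp.2
        refine ⟨f :: l₂, ⟨hp.1, h₁⟩, ?_, ?_⟩
        · rw [Γ.pathVal_cons, Γ.pathVal_cons, h₂]
        · intro f' hf'
          rcases List.mem_cons.1 hf' with rfl | hf'
          · exact ⟨hfe, hfbar⟩
          · exact h₃ f' hf'


/-- lifting a path through the hair-cut inclusion -/
lemma hair_lift {X G : Type} [Group G] {Γ Γ' : LabeledGraph X} (g : X → G)
    (π : GraphHom Γ' Γ) (hVinj : Function.Injective π.fV) :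
    ∀ (l : List Γ.E) (v' w' : Γ'.V), (∀ f ∈ l, f ∈ Set.range π.fE) →
      Γ.IsPathFrom (π.fV v') (π.fV w') l →
      ∃ l', Γ'.IsPathFrom v' w' l' ∧ Γ'.pathVal g l' = Γ.pathVal g l := by
  intro l
  induction l with
  | nil =>
    intro v' w' _ hp
    exact ⟨[], hVinj hp, rfl⟩
  | cons f rest ih =>
    intro v' w' hr hp
    obtain ⟨f', rfl⟩ := hr f List.mem_cons_self
    have h1 : Γ'.ini f' = v' := hVinj (by rw [← π.map_ini]; exact hp.1)
    have h2 : Γ.IsPathFrom (π.fV (Γ'.ter f')) (π.fV w') rest := by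
      rw [← π.map_ter]; exact hp.2
    obtain ⟨l', hp', hv'⟩ := ih (Γ'.ter f') w' (fun f hf => hr f (List.mem_cons_of_mem _ hf)) h2
    refine ⟨f' :: l', ⟨h1, hp'⟩, ?_⟩
    rw [Γ'.pathVal_cons, Γ.pathVal_cons, hv']
    congr 1
    simp [LabeledGraph.edgeVal, π.map_lab]

/-- lifting a path through a folding -/
lemma fold_lift {X G : Type} [Group G] {Γ Γ' : LabeledGraph X} (g : X → G)
    (π : GraphHom Γ Γ') (e₁ e₂ : Γ.E)
    (hini : Γ.ini e₁ = Γ.ini e₂) (hlab : Γ.lab e₁ = Γ.lab e₂)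
    (hEsurj : Function.Surjective π.fE)
    (hVinj : ∀ u v : Γ.V, π.fV u = π.fV v →
      u = v ∨ ({u, v} : Set Γ.V) = {Γ.ter e₁, Γ.ter e₂}) :
    ∀ (l' : List Γ'.E) (u w : Γ.V), Γ'.IsPathFrom (π.fV u) (π.fV w) l' →
      ∃ l, Γ.IsPathFrom u w l ∧ Γ.pathVal g l = Γ'.pathVal g l' := by
  have hval : Γ.edgeVal g e₁ = Γ.edgeVal g e₂ := by
    simp [LabeledGraph.edgeVal, hlab]
  have connect : ∀ a b : Γ.V, π.fV a = π.fV b →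
      ∃ c, Γ.IsPathFrom a b c ∧ Γ.pathVal g c = 1 := by
    intro a b hab
    by_cases hab' : a = b
    · exact ⟨[], hab', rfl⟩
    rcases hVinj a b hab with rfl | hset
    · exact ⟨[], rfl, rfl⟩
    have ha : a ∈ ({Γ.ter e₁, Γ.ter e₂} : Set Γ.V) := by
      rw [← hset]; exact Set.mem_insert _ _
    have hb : b ∈ ({Γ.ter e₁, Γ.ter e₂} : Set Γ.V) := by
      rw [← hset]; exact Set.mem_insert_of_mem _ rfl
    rcases ha with ha | ha <;> rcases hb with hb | hb
    · exact absurd (ha.trans hb.symm) hab'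
    · refine ⟨[Γ.bar e₁, e₂], ⟨by rw [ha]; rfl, by rw [Γ.ter_bar]; exact hini.symm, hb.symm⟩, ?_⟩
      rw [Γ.pathVal_cons, Γ.pathVal_cons, Γ.pathVal_nil, Γ.edgeVal_bar, hval]
      group
    · refine ⟨[Γ.bar e₂, e₁], ⟨by rw [ha]; rfl, by rw [Γ.ter_bar]; exact hini, hb.symm⟩, ?_⟩
      rw [Γ.pathVal_cons, Γ.pathVal_cons, Γ.pathVal_nil, Γ.edgeVal_bar, ← hval]
      group
    · exact absurd (ha.trans hb.symm) hab'
  intro l'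
  induction l' with
  | nil =>
    intro u w hp
    exact connect u w hp
  | cons f' rest' ih =>
    intro u w hp
    obtain ⟨f, rfl⟩ := hEsurj f'
    have h1 : π.fV (Γ.ini f) = π.fV u := by rw [← π.map_ini]; exact hp.1
    obtain ⟨c, hc, hcv⟩ := connect u (Γ.ini f) h1.symm
    have h2 : Γ'.IsPathFrom (π.fV (Γ.ter f)) (π.fV w) rest' := by
      rw [← π.map_ter]; exact hp.2
    obtain ⟨rest, hr, hrv⟩ := ih (Γ.ter f) w h2
    refine ⟨c ++ f :: rest, Γ.isPathFrom_append hc ⟨rfl, hr⟩, ?_⟩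
    rw [Γ.pathVal_append, hcv, one_mul, Γ.pathVal_cons, Γ'.pathVal_cons, hrv]
    congr 1
    simp [LabeledGraph.edgeVal, π.map_lab]

end StallingsAux

/-- For a finitely presented group `G = gp⟨X|R⟩`, a single Stallings
folding or the cutting of a single hair does not change the subgroup `Lab(Γ, v₀)`
determined by a pointed graph labelled with `X^±`. -/
theorem stmt_9
    {X G : Type} [Group G] [Finite X] (ge : X → G)
    (hgen : Subgroup.closure (Set.range ge) = ⊤)
    (Γ Γ' : LabeledGraph X) (v₀ : Γ.V) (v₀' : Γ'.V)
    (h : IsFoldingOf Γ Γ' v₀ v₀' ∨ IsHairCutOf Γ Γ' v₀ v₀') :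
    Γ.LabSet ge v₀ = Γ'.LabSet ge v₀' := by
  ext x
  simp only [LabeledGraph.LabSet, Set.mem_setOf_eq]
  rcases h with hfold | hhair
  · obtain ⟨π, e₁, e₂, hne, hini, hlab, hVsurj, hEsurj, hv0, hfe, hfv, hEinj, hVinj⟩ := hfold
    constructor
    · rintro ⟨l, hl, rfl⟩
      exact ⟨l.map π.fE, by rw [← hv0]; exact π.map_path hl, π.map_pathVal ge l⟩
    · rintro ⟨l', hl', rfl⟩
      have hl'' : Γ'.IsPathFrom (π.fV v₀) (π.fV v₀) l' := by rw [hv0]; exact hl'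
      obtain ⟨l, hp, hv⟩ := fold_lift ge π e₁ e₂ hini hlab hEsurj hVinj l' v₀ v₀ hl''
      exact ⟨l, hp, hv⟩
  · obtain ⟨π, e, hdeg, hVinj, hEinj, hVrange, hErange, hv0⟩ := hhair
    constructor
    · rintro ⟨l, hl, rfl⟩
      have hv0ne : v₀ ≠ Γ.ter e := by
        intro hh
        have : v₀ ∈ Set.range π.fV := ⟨v₀', hv0⟩
        rw [hVrange] at this
        exact this hh
      obtain ⟨l₂, h₁, h₂, h₃⟩ := hair_reduce ge e hdeg l.length l v₀ v₀ le_rfl hv0ne hv0ne hl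
      have hrange : ∀ f ∈ l₂, f ∈ Set.range π.fE := by
        intro f hf
        rw [hErange]
        exact h₃ f hf
      obtain ⟨l', hp', hval⟩ := hair_lift ge π hVinj l₂ v₀' v₀'
        hrange (by rw [hv0]; exact h₁)
      exact ⟨l', hp', by rw [hval, h₂]⟩
    · rintro ⟨l', hl', rfl⟩
      exact ⟨l'.map π.fE, by rw [← hv0]; exact π.map_path hl', π.map_pathVal ge l'⟩
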